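/- Let φ : U → V be a linear map between finite-dimensional real vector spaces and let D_V ⊆ V × V* be a linear Dirac structure on V. Then the backward image B_φ(D_V) = {(u, β ∘ φ) | u ∈ U, β ∈ V*, (φ(u), β) ∈ D_V} is a linear Dirac structure on U. -/

import Mathlib

/-
Pairing `(u₁, β₁ ∘ φ)` with `(u₂, β₂ ∘ φ)` gives the same number as pairing `(φ u₁, β₁)` with
`(φ u₂, β₂)`, so `B_φ(D)` is isotropic when `D` is. Conversely, if `(u, α) ⊥ B_φ(D)`, then
`β (w + φ u') := α u' - γ (φ u)` for `(w, γ) ∈ D` is a well-defined functional on `pr₁ D + range φ`;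
any extension `β` of it to `V` satisfies `β ∘ φ = α` and `(φ u, β) ∈ D^⊥ ⊆ D`, so `(u, α) ∈ B_φ(D)`.
-/

/-- The canonical symmetric pairing `⟪(u₁,α₁),(u₂,α₂)⟫ = α₁(u₂) + α₂(u₁)`
on `U ⊕ U*`, as a bilinear form. -/
noncomputable def diracPairing (U : Type*) [AddCommGroup U] [Module ℝ U] :
    LinearMap.BilinForm ℝ (U × Module.Dual ℝ U) :=
  LinearMap.mk₂ ℝ (fun x y => x.2 y.1 + y.2 x.1)
    (by intro m₁ m₂ n; simp; ring)
    (by intro c m n; simp; ring)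
    (by intro m n₁ n₂; simp; ring)
    (by intro c m n; simp; ring)

/-- The orthogonal complement of a subspace `D ⊆ U ⊕ U*` with respect to the
canonical pairing. -/
noncomputable def diracOrthogonal (U : Type*) [AddCommGroup U] [Module ℝ U]
    (D : Submodule ℝ (U × Module.Dual ℝ U)) : Submodule ℝ (U × Module.Dual ℝ U) :=
  LinearMap.BilinForm.orthogonal (diracPairing U) D

/-- The backward image `B_φ(D_V) = {(u, β ∘ φ) | u ∈ U, β ∈ V*, (φ(u), β) ∈ D_V}`
of a subspace `D_V ⊆ V ⊕ V*` under a linear map `φ : U → V`. -/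
noncomputable def backwardImage {U V : Type*} [AddCommGroup U] [Module ℝ U]
    [AddCommGroup V] [Module ℝ V] (φ : U →ₗ[ℝ] V)
    (D : Submodule ℝ (V × Module.Dual ℝ V)) : Submodule ℝ (U × Module.Dual ℝ U) where
  carrier := {p | ∃ β : Module.Dual ℝ V, p.2 = β.comp φ ∧ (φ p.1, β) ∈ D}
  add_mem' := by
    rintro ⟨u₁, α₁⟩ ⟨u₂, α₂⟩ ⟨β₁, h₁, hD₁⟩ ⟨β₂, h₂, hD₂⟩
    exact ⟨β₁ + β₂, by simp at h₁ h₂; simp [h₁, h₂, LinearMap.add_comp],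
      by simpa using D.add_mem hD₁ hD₂⟩
  zero_mem' := ⟨0, by simp, by first | (simp; exact D.zero_mem) | exact D.zero_mem⟩
  smul_mem' := by
    rintro c ⟨u, α⟩ ⟨β, h, hD⟩
    exact ⟨c • β, by simp at h; simp [h, LinearMap.smul_comp],
      by simpa using D.smul_mem c hD⟩

theorem LinearMap.exists_dual_comp_eq_of_ker_le {K V₁ V₂ : Type*} [Field K]
    [AddCommGroup V₁] [Module K V₁] [AddCommGroup V₂] [Module K V₂] (f : V₁ →ₗ[K] V₂)
    {h : Module.Dual K V₁} (hker : LinearMap.ker f ≤ LinearMap.ker h) :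
    ∃ g : Module.Dual K V₂, g ∘ₗ f = h := by
  have : h ∈ LinearMap.range f.dualMap := by
    rw [LinearMap.range_dualMap_eq_dualAnnihilator_ker, Submodule.mem_dualAnnihilator]
    exact fun _ hw ↦ hker hw
  exact this

section Dirac

variable {U V : Type*} [AddCommGroup U] [Module ℝ U] [AddCommGroup V] [Module ℝ V]

@[simp]
theorem diracPairing_apply (x y : U × Module.Dual ℝ U) :
    diracPairing U x y = x.2 y.1 + y.2 x.1 :=
  rfl

theorem backwardImage_le_diracOrthogonal (φ : U →ₗ[ℝ] V)
    {D : Submodule ℝ (V × Module.Dual ℝ V)} (hD : D ≤ diracOrthogonal V D) :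
    backwardImage φ D ≤ diracOrthogonal U (backwardImage φ D) := by
  rintro ⟨u₁, _⟩ ⟨β₁, rfl, h₁⟩ ⟨u₂, _⟩ ⟨β₂, rfl, h₂⟩
  simpa using hD h₁ _ h₂

theorem diracOrthogonal_backwardImage_le (φ : U →ₗ[ℝ] V)
    {D : Submodule ℝ (V × Module.Dual ℝ V)} (hD : diracOrthogonal V D ≤ D) :
    diracOrthogonal U (backwardImage φ D) ≤ backwardImage φ D := by
  rintro ⟨u, α⟩ hu
  have hpair (u' : U) (β : Module.Dual ℝ V) (h : (φ u', β) ∈ D) : β (φ u) + α u' = 0 := by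
    simpa using hu (u', β ∘ₗ φ) ⟨β, rfl, h⟩
  -- `β ∘ₗ Ψ = χ` says `β (w + φ u') = α u' - γ (φ u)` for `(w, γ) ∈ D`; `hker` is well-definedness.
  let Ψ : D × U →ₗ[ℝ] V := (LinearMap.fst ℝ V _ ∘ₗ D.subtype).coprod φ
  let χ : Module.Dual ℝ (D × U) :=
    (-(LinearMap.applyₗ (φ u) ∘ₗ LinearMap.snd ℝ V _ ∘ₗ D.subtype)).coprod α
  have hker : LinearMap.ker Ψ ≤ LinearMap.ker χ := by
    rintro ⟨⟨⟨w, γ⟩, hwγ⟩, u'⟩ hz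
    have hw : w = φ (-u') := by
      rw [map_neg]; exact eq_neg_of_add_eq_zero_left hz
    have := hpair (-u') γ (hw ▸ hwγ)
    rw [map_neg] at this
    show -γ (φ u) + α u' = 0
    linarith
  obtain ⟨β, hβΨ⟩ := LinearMap.exists_dual_comp_eq_of_ker_le (K := ℝ) (V₁ := D × U) Ψ hker
  have hβ (v : V × Module.Dual ℝ V) (hv : v ∈ D) (u' : U) :
      β (v.1 + φ u') = -v.2 (φ u) + α u' :=
    congr($hβΨ (⟨v, hv⟩, u'))
  refine ⟨β, ?_, hD ?_⟩
  · ext u'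
    simpa using (hβ 0 D.zero_mem u').symm
  · rintro ⟨w, γ⟩ hwγ
    have hw := hβ (w, γ) hwγ 0
    rw [map_zero, add_zero] at hw
    simp [hw]

end Dirac

theorem backward_of_dirac_is_dirac_general
    {U V : Type*} [AddCommGroup U] [Module ℝ U]
    [AddCommGroup V] [Module ℝ V]
    (φ : U →ₗ[ℝ] V) (DV : Submodule ℝ (V × Module.Dual ℝ V))
    (hDV : DV = diracOrthogonal V DV) :
    backwardImage φ DV = diracOrthogonal U (backwardImage φ DV) :=
  le_antisymm (backwardImage_le_diracOrthogonal φ hDV.le)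
    (diracOrthogonal_backwardImage_le φ hDV.ge)

/-- The backward image of a linear Dirac structure under a linear map
between finite-dimensional real vector spaces is a linear Dirac structure. -/
theorem backward_of_dirac_is_dirac
    {U V : Type*} [AddCommGroup U] [Module ℝ U] [FiniteDimensional ℝ U]
    [AddCommGroup V] [Module ℝ V] [FiniteDimensional ℝ V]
    (φ : U →ₗ[ℝ] V) (DV : Submodule ℝ (V × Module.Dual ℝ V))
    (hDV : DV = diracOrthogonal V DV) :
    backwardImage φ DV = diracOrthogonal U (backwardImage φ DV) :=
  backward_of_dirac_is_dirac_general φ DV hDV
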